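/- arXiv:2507.04105 — 2 statements merged into one kernel-verified Lean document; each statement's English description precedes it below -/
import Mathlib

section
/- Let d ≥ 1, σ > 0, and let μ be the isotropic Gaussian measure N(0, σ²I) on ℝ^d, given as the product of d copies of the one-dimensional Gaussian N(0, σ²). Let Y be a measurable space, f : ℝ^d → Y measurable, R ⊆ Y measurable, and fix z, δ ∈ ℝ^d and a real number b. If μ{ε : f(z + ε) ∈ R} ≤ Ψ(b), then μ{ε : f(z + δ + ε) ∈ R} ≤ Ψ(b + ‖δ‖₂/σ), where Ψ is the standard normal cumulative distribution function. -/
open MeasureTheory ProbabilityTheory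

/-- The standard normal cumulative distribution function `Ψ(x) = N(0,1)((-∞, x])`. -/
noncomputable def stdNormalCDF (x : ℝ) : ℝ :=
  ((gaussianReal 0 1) (Set.Iic x)).toReal

/-- The isotropic Gaussian measure `N(m, σ²I)` on `ℝ^d`, given as the product of `d` copies
of the one-dimensional Gaussian with mean the corresponding coordinate of `m`
and variance `σ²`. -/
noncomputable def isoGaussian (d : ℕ) (m : EuclideanSpace ℝ (Fin d)) (σ : ℝ) :
    Measure (EuclideanSpace ℝ (Fin d)) :=
  (Measure.pi fun i => gaussianReal (m i) ((σ ^ 2).toNNReal)).map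
    (MeasurableEquiv.toLp 2 (Fin d → ℝ))

/-!
Shifting the noise by `δ` turns `N(0, σ²I)` into `N(δ, σ²I)`, whose density with respect to
`N(0, σ²I)` is `exp ((⟪δ, x⟫ - ‖δ‖² / 2) / σ²)`, an increasing function of `T x = ⟪δ, x⟫`.
Hence (Neyman–Pearson) among the sets of `N(0, σ²I)`-mass at most `Ψ(b)`, the half-space
`{T ≥ -σ‖δ‖b}` has the largest `N(δ, σ²I)`-mass. Its `N(0, σ²I)`-mass is exactly `Ψ(b)`,
as `T ∼ N(0, σ²‖δ‖²)` under `N(0, σ²I)`, and its `N(δ, σ²I)`-mass is `Ψ(b + ‖δ‖/σ)`,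
as `T ∼ N(‖δ‖², σ²‖δ‖²)` under `N(δ, σ²I)`.
-/

open Real
open scoped NNReal ENNReal

lemma MeasurableEquiv.map_withDensity {α β : Type*} [MeasurableSpace α] [MeasurableSpace β]
    (μ : Measure α) (e : α ≃ᵐ β) (f : α → ℝ≥0∞) :
    (μ.withDensity f).map e = (μ.map e).withDensity (f ∘ e.symm) := by
  ext s hs
  rw [e.map_apply, withDensity_apply _ (e.measurable hs), withDensity_apply _ hs, e.restrict_map,
    lintegral_map_equiv]
  simp

lemma withDensity_comp_apply_le_of_le_preimage_Ici {α : Type*} [MeasurableSpace α]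
    (μ : Measure α) [IsFiniteMeasure μ] {T : α → ℝ} (hT : Measurable T) {φ : ℝ → ℝ≥0∞}
    (hφ : Monotone φ) {A : Set α} (hA : MeasurableSet A) {a : ℝ}
    (hle : μ A ≤ μ (T ⁻¹' Set.Ici a)) :
    μ.withDensity (φ ∘ T) A ≤ μ.withDensity (φ ∘ T) (T ⁻¹' Set.Ici a) := by
  set H := T ⁻¹' Set.Ici a
  set ν := μ.withDensity (φ ∘ T)
  have hH : MeasurableSet H := hT measurableSet_Ici
  have hdiff : μ (A \ H) ≤ μ (H \ A) := by
    rw [← measure_sdiff_add_inter A hH, ← measure_sdiff_add_inter H hA, Set.inter_comm] at hle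
    exact ENNReal.le_of_add_le_add_right (measure_ne_top μ _) hle
  have hφT : Measurable (φ ∘ T) := hφ.measurable.comp hT
  have hbelow : ν (A \ H) ≤ φ a * μ (A \ H) := calc
    ν (A \ H) ≤ ∫⁻ _ in A \ H, φ a ∂μ := by
      rw [withDensity_apply _ (hA.diff hH)]
      exact setLIntegral_mono' (hA.diff hH) fun x hx => hφ (not_le.mp hx.2).le
    _ = φ a * μ (A \ H) := setLIntegral_const _ _
  have habove : φ a * μ (H \ A) ≤ ν (H \ A) := calc
    φ a * μ (H \ A) = ∫⁻ _ in H \ A, φ a ∂μ := (setLIntegral_const _ _).symm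
    _ ≤ ν (H \ A) := by
      rw [withDensity_apply _ (hH.diff hA)]
      exact setLIntegral_mono hφT fun x hx => hφ hx.1
  calc ν A = ν (A \ H) + ν (A ∩ H) := (measure_sdiff_add_inter A hH).symm
    _ ≤ ν (H \ A) + ν (A ∩ H) := by
      gcongr ?_ + _
      calc ν (A \ H) ≤ φ a * μ (A \ H) := hbelow
        _ ≤ φ a * μ (H \ A) := by gcongr
        _ ≤ ν (H \ A) := habove
    _ = ν H := by rw [Set.inter_comm, measure_sdiff_add_inter H hA]

lemma gaussianReal_Ici {s : ℝ} (hs : 0 < s) (m a : ℝ) :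
    gaussianReal m (s ^ 2).toNNReal (Set.Ici a) = ENNReal.ofReal (stdNormalCDF ((m - a) / s)) := by
  have hlaw : (gaussianReal 0 1).map (fun x => m - s * x) = gaussianReal m (s ^ 2).toNNReal := by
    rw [show (fun x => m - s * x) = (m - ·) ∘ (s * ·) from rfl,
      ← Measure.map_map (by fun_prop) (by fun_prop), gaussianReal_map_const_mul,
      gaussianReal_map_const_sub]
    congr
    · ring
    · ext; simp [sq_nonneg]
  have hpre : (fun x => m - s * x) ⁻¹' Set.Ici a = Set.Iic ((m - a) / s) := by
    ext x
    simp only [Set.mem_preimage, Set.mem_Ici, Set.mem_Iic, le_div_iff₀ hs]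
    constructor <;> intro <;> linarith
  rw [stdNormalCDF, ENNReal.ofReal_toReal (measure_ne_top _ _), ← hpre, ← hlaw,
    Measure.map_apply (by fun_prop) measurableSet_Ici]

lemma gaussianReal_eq_withDensity_exp (m : ℝ) {v : ℝ≥0} (hv : v ≠ 0) :
    gaussianReal m v = (gaussianReal 0 v).withDensity
      (fun x => ENNReal.ofReal (exp ((m * x - m ^ 2 / 2) / v))) := by
  have hv' : (v : ℝ) ≠ 0 := by exact_mod_cast hv
  rw [gaussianReal_of_var_ne_zero _ hv, gaussianReal_of_var_ne_zero _ hv,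
    ← withDensity_mul _ (measurable_gaussianPDF 0 v) (by fun_prop)]
  congr 1
  ext x
  simp only [Pi.mul_apply, gaussianPDF, gaussianPDFReal, sub_zero]
  rw [← ENNReal.ofReal_mul (by positivity), mul_assoc _ (rexp _), ← exp_add]
  congr 3
  field_simp
  ring

section Pi

variable {ι : Type*} [Fintype ι]

lemma lintegral_fintype_prod_eq_prod {α : ι → Type*} [∀ i, MeasurableSpace (α i)]
    (μ : ∀ i, Measure (α i)) [∀ i, IsProbabilityMeasure (μ i)]
    {g : ∀ i, α i → ℝ≥0∞} (hg : ∀ i, Measurable (g i)) :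
    ∫⁻ x, ∏ i, g i (x i) ∂Measure.pi μ = ∏ i, ∫⁻ y, g i y ∂μ i := by
  rw [lintegral_prod_eq_prod_lintegral_of_indepFun _ _
    (iIndepFun_pi fun i => (hg i).aemeasurable) fun i => (hg i).comp (measurable_pi_apply i)]
  exact Finset.prod_congr rfl fun i _ =>
    (measurePreserving_eval μ i).lintegral_comp (hg i)

lemma MeasureTheory.Measure.pi_withDensity {α : ι → Type*} [∀ i, MeasurableSpace (α i)]
    (μ : ∀ i, Measure (α i)) [∀ i, IsProbabilityMeasure (μ i)]
    {g : ∀ i, α i → ℝ≥0∞} (hg : ∀ i, Measurable (g i))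
    [∀ i, SigmaFinite ((μ i).withDensity (g i))] :
    Measure.pi (fun i => (μ i).withDensity (g i))
      = (Measure.pi μ).withDensity (fun x => ∏ i, g i (x i)) := by
  refine Measure.pi_eq fun s hs => ?_
  have hbox := MeasurableSet.univ_pi hs
  rw [withDensity_apply _ hbox, ← lintegral_indicator hbox]
  have hind : (Set.univ.pi s).indicator (fun x => ∏ i, g i (x i))
      = fun x => ∏ i, (s i).indicator (g i) (x i) := by
    ext x
    by_cases hx : x ∈ Set.univ.pi s
    · simp_all [Set.indicator_of_mem]
    · obtain ⟨i, hi⟩ : ∃ i, x i ∉ s i := by simpa using hx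
      rw [Set.indicator_of_notMem hx, Finset.prod_eq_zero (Finset.mem_univ i)
        (Set.indicator_of_notMem hi _)]
  rw [hind, lintegral_fintype_prod_eq_prod μ fun i => (hg i).indicator (hs i)]
  exact Finset.prod_congr rfl fun i _ => by
    rw [withDensity_apply _ (hs i), lintegral_indicator (hs i)]

lemma pi_gaussianReal_eq_withDensity (m : ι → ℝ) {v : ℝ≥0} (hv : v ≠ 0) :
    Measure.pi (fun i => gaussianReal (m i) v)
      = (Measure.pi fun _ : ι => gaussianReal 0 v).withDensity
          (fun x => ENNReal.ofReal (exp ((∑ i, m i * x i - (∑ i, m i ^ 2) / 2) / v))) := by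
  rw [funext fun i => gaussianReal_eq_withDensity_exp (m i) hv,
    Measure.pi_withDensity _ fun i => by fun_prop]
  congr 1
  ext x
  rw [← ENNReal.ofReal_prod_of_nonneg fun i _ => (exp_pos _).le, ← exp_sum]
  congr 2
  rw [← Finset.sum_div, Finset.sum_sub_distrib, Finset.sum_div]

lemma map_sum_pi_gaussianReal (m : ι → ℝ) (v : ι → ℝ≥0) :
    (Measure.pi fun i => gaussianReal (m i) (v i)).map (fun x => ∑ i, x i)
      = gaussianReal (∑ i, m i) (∑ i, v i) := by
  refine Measure.ext_of_charFun ?_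
  ext t
  rw [charFun_map_sum_pi_eq_prod, Finset.prod_apply]
  simp_rw [charFun_gaussianReal, ← Complex.exp_sum]
  congr 1
  push_cast
  simp only [Finset.sum_sub_distrib, Finset.mul_sum, Finset.sum_mul, Finset.sum_div]

lemma pi_gaussianReal_map_sum_mul (m c : ι → ℝ) (v : ℝ≥0) :
    (Measure.pi fun i => gaussianReal (m i) v).map (fun x => ∑ i, c i * x i)
      = gaussianReal (∑ i, c i * m i) ((∑ i, c i ^ 2).toNNReal * v) := by
  have hscale : (Measure.pi fun i => gaussianReal (m i) v).map (fun x i => c i * x i)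
      = Measure.pi fun i => gaussianReal (c i * m i) (.mk (c i ^ 2) (sq_nonneg _) * v) := by
    rw [Measure.pi_map_pi fun i => by fun_prop]
    simp_rw [gaussianReal_map_const_mul]
  rw [show (fun x : ι → ℝ => ∑ i, c i * x i) = (fun y => ∑ i, y i) ∘ (fun x i => c i * x i)
      from rfl, ← Measure.map_map (by fun_prop) (by fun_prop), hscale, map_sum_pi_gaussianReal]
  congr 1
  ext
  simp only [NNReal.coe_sum, NNReal.coe_mul, NNReal.coe_mk, Finset.sum_mul,
    Real.coe_toNNReal _ (Finset.sum_nonneg fun i _ => sq_nonneg (c i))]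

lemma pi_gaussianReal_map_const_add (m w : ι → ℝ) (v : ℝ≥0) :
    (Measure.pi fun i => gaussianReal (m i) v).map (w + ·)
      = Measure.pi fun i => gaussianReal (m i + w i) v := by
  rw [show (w + ·) = fun x i => w i + x i from rfl, Measure.pi_map_pi fun i => by fun_prop]
  simp_rw [gaussianReal_map_const_add]

end Pi

section IsoGaussian

variable {d : ℕ} {σ : ℝ}

instance (m : EuclideanSpace ℝ (Fin d)) : IsProbabilityMeasure (isoGaussian d m σ) :=
  Measure.isProbabilityMeasure_map (MeasurableEquiv.measurable _).aemeasurable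

lemma isoGaussian_map_const_add (m w : EuclideanSpace ℝ (Fin d)) :
    (isoGaussian d m σ).map (w + ·) = isoGaussian d (m + w) σ := by
  rw [isoGaussian, Measure.map_map (by fun_prop) (MeasurableEquiv.measurable _),
    show (w + ·) ∘ MeasurableEquiv.toLp 2 (Fin d → ℝ)
      = MeasurableEquiv.toLp 2 (Fin d → ℝ) ∘ (WithLp.ofLp w + ·) from rfl,
    ← Measure.map_map (MeasurableEquiv.measurable _) (by fun_prop), pi_gaussianReal_map_const_add]
  rfl

lemma isoGaussian_eq_withDensity (m : EuclideanSpace ℝ (Fin d)) (hσ : σ ≠ 0) :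
    isoGaussian d m σ = (isoGaussian d 0 σ).withDensity
      (fun x => ENNReal.ofReal (exp ((inner ℝ m x - ‖m‖ ^ 2 / 2) / σ ^ 2))) := by
  have hv : (σ ^ 2).toNNReal ≠ 0 := by simpa using hσ
  rw [isoGaussian, isoGaussian, pi_gaussianReal_eq_withDensity _ hv,
    MeasurableEquiv.map_withDensity]
  congr 1
  ext x
  simp [EuclideanSpace.real_norm_sq_eq, PiLp.inner_apply, mul_comm, max_eq_left (sq_nonneg σ)]

lemma isoGaussian_map_inner (m u : EuclideanSpace ℝ (Fin d)) :
    (isoGaussian d m σ).map (inner ℝ u)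
      = gaussianReal (inner ℝ u m) ((σ * ‖u‖) ^ 2).toNNReal := by
  rw [isoGaussian, Measure.map_map (by fun_prop) (MeasurableEquiv.measurable _),
    show inner ℝ u ∘ MeasurableEquiv.toLp 2 (Fin d → ℝ) = fun x => ∑ i, u i * x i by
      ext x; simp [PiLp.inner_apply, mul_comm],
    pi_gaussianReal_map_sum_mul]
  congr 1
  · simp [PiLp.inner_apply, mul_comm]
  · rw [mul_pow, EuclideanSpace.real_norm_sq_eq, ← Real.toNNReal_mul (by positivity), mul_comm]

end IsoGaussian

theorem smoothed_upper_bound_shift_general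
    (d : ℕ) (σ : ℝ) (hσ : 0 < σ)
    {Y : Type*} [MeasurableSpace Y]
    (f : EuclideanSpace ℝ (Fin d) → Y) (hf : Measurable f)
    (R : Set Y) (hR : MeasurableSet R)
    (z δ : EuclideanSpace ℝ (Fin d)) (b : ℝ)
    (h : isoGaussian d 0 σ {ε | f (z + ε) ∈ R} ≤ ENNReal.ofReal (stdNormalCDF b)) :
    isoGaussian d 0 σ {ε | f (z + δ + ε) ∈ R} ≤
      ENNReal.ofReal (stdNormalCDF (b + ‖δ‖ / σ)) := by
  obtain rfl | hδ := eq_or_ne δ 0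
  · simpa using h
  have hσN : 0 < σ * ‖δ‖ := mul_pos hσ (norm_pos_iff.mpr hδ)
  set T : EuclideanSpace ℝ (Fin d) → ℝ := inner ℝ δ
  set φ : ℝ → ℝ≥0∞ := fun t => ENNReal.ofReal (exp ((t - ‖δ‖ ^ 2 / 2) / σ ^ 2))
  have hφ : Monotone φ := fun s t hst => ENNReal.ofReal_le_ofReal (exp_le_exp.mpr (by gcongr))
  have hA : MeasurableSet {ε | f (z + ε) ∈ R} := hf.comp (measurable_const_add z) hR
  have hdens : isoGaussian d δ σ = (isoGaussian d 0 σ).withDensity (φ ∘ T) :=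
    isoGaussian_eq_withDensity δ hσ.ne'
  have hshift :
      isoGaussian d 0 σ {ε | f (z + δ + ε) ∈ R} = isoGaussian d δ σ {ε | f (z + ε) ∈ R} := by
    rw [← zero_add δ, ← isoGaussian_map_const_add, Measure.map_apply (measurable_const_add _) hA]
    simp [add_assoc]
  have hH0 :
      isoGaussian d 0 σ (T ⁻¹' Set.Ici (-(σ * ‖δ‖ * b))) = ENNReal.ofReal (stdNormalCDF b) := by
    rw [← Measure.map_apply (by fun_prop) measurableSet_Ici, isoGaussian_map_inner,
      gaussianReal_Ici hσN, inner_zero_right, zero_sub, neg_neg, mul_div_cancel_left₀ _ hσN.ne']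
  have hHδ : isoGaussian d δ σ (T ⁻¹' Set.Ici (-(σ * ‖δ‖ * b))) =
      ENNReal.ofReal (stdNormalCDF (b + ‖δ‖ / σ)) := by
    rw [← Measure.map_apply (by fun_prop) measurableSet_Ici, isoGaussian_map_inner,
      gaussianReal_Ici hσN, real_inner_self_eq_norm_sq]
    field_simp
    ring_nf
  rw [hshift, ← hHδ, hdens]
  exact withDensity_comp_apply_le_of_le_preimage_Ici _ (by fun_prop) hφ hA (h.trans hH0.ge)

theorem smoothed_upper_bound_shift
    (d : ℕ) (hd : 1 ≤ d) (σ : ℝ) (hσ : 0 < σ)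
    {Y : Type*} [MeasurableSpace Y]
    (f : EuclideanSpace ℝ (Fin d) → Y) (hf : Measurable f)
    (R : Set Y) (hR : MeasurableSet R)
    (z δ : EuclideanSpace ℝ (Fin d)) (b : ℝ)
    (h : isoGaussian d 0 σ {ε | f (z + ε) ∈ R} ≤ ENNReal.ofReal (stdNormalCDF b)) :
    isoGaussian d 0 σ {ε | f (z + δ + ε) ∈ R} ≤
      ENNReal.ofReal (stdNormalCDF (b + ‖δ‖ / σ)) :=
  smoothed_upper_bound_shift_general d σ hσ f hf R hR z δ b h
end

section
/- (Neyman–Pearson comparison lemma, sublevel form.) Let (Ω, 𝒜) be a measurable space, ν a σ-finite measure on Ω, and let P = ν.withDensity p and Q = ν.withDensity q be probability measures with measurable densities p, q : Ω → ℝ≥0∞. Fix t ∈ ℝ≥0∞ and let S = {x : q(x) ≤ t · p(x)}. Then for every measurable set S′ with P(S′) ≥ P(S), one has Q(S′) ≥ Q(S); equivalently, among all measurable sets of at least a given P-probability, the likelihood-ratio sublevel set minimizes the Q-probability. -/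
open MeasureTheory

/-!
On `S \ S'` the density `q` is at most `t * p`, and on `S' \ S` it is at least `t * p`. Since
`P S ≤ P S'` forces `P (S \ S') ≤ P (S' \ S)`, we get
`Q (S \ S') ≤ t * P (S \ S') ≤ t * P (S' \ S) ≤ Q (S' \ S)`, and adding `Q (S ∩ S')` gives
`Q S ≤ Q S'`.
-/

namespace MeasureTheory

variable {Ω : Type*} [MeasurableSpace Ω]

lemma measure_sdiff_le_sdiff_of_le {μ : Measure Ω} [IsFiniteMeasure μ] {s s' : Set Ω}
    (hs : MeasurableSet s) (hs' : MeasurableSet s') (h : μ s ≤ μ s') :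
    μ (s \ s') ≤ μ (s' \ s) := by
  have hsplit : μ (s ∩ s') + μ (s \ s') ≤ μ (s ∩ s') + μ (s' \ s) := by
    rw [measure_inter_add_sdiff s hs', Set.inter_comm, measure_inter_add_sdiff s' hs]
    exact h
  exact (ENNReal.add_le_add_iff_left (measure_ne_top μ _)).mp hsplit

lemma measure_le_of_sdiff_le_sdiff {μ : Measure Ω} {s s' : Set Ω}
    (hs : MeasurableSet s) (hs' : MeasurableSet s') (h : μ (s \ s') ≤ μ (s' \ s)) :
    μ s ≤ μ s' :=
  calc μ s = μ (s ∩ s') + μ (s \ s') := (measure_inter_add_sdiff s hs').symm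
    _ ≤ μ (s' ∩ s) + μ (s' \ s) := by rw [Set.inter_comm]; gcongr
    _ = μ s' := measure_inter_add_sdiff s' hs

lemma withDensity_apply_le_const_mul {ν : Measure Ω} {p q : Ω → ENNReal} (hp : Measurable p)
    {t : ENNReal} {A : Set Ω} (hA : MeasurableSet A) (hqp : ∀ x ∈ A, q x ≤ t * p x) :
    ν.withDensity q A ≤ t * ν.withDensity p A := by
  rw [withDensity_apply q hA, withDensity_apply p hA, ← lintegral_const_mul t hp]
  exact setLIntegral_mono' hA hqp

lemma const_mul_le_withDensity_apply {ν : Measure Ω} {p q : Ω → ENNReal}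
    {t : ENNReal} {A : Set Ω} (hA : MeasurableSet A) (hpq : ∀ x ∈ A, t * p x ≤ q x) :
    t * ν.withDensity p A ≤ ν.withDensity q A := by
  rw [withDensity_apply q hA, withDensity_apply p hA]
  exact (lintegral_const_mul_le t p).trans (setLIntegral_mono' hA hpq)

end MeasureTheory

theorem neymanPearson_sublevel_general
    {Ω : Type*} [MeasurableSpace Ω] (ν : Measure Ω)
    (p q : Ω → ENNReal) (hp : Measurable p) (hq : Measurable q)
    [IsProbabilityMeasure (ν.withDensity p)]
    (t : ENNReal) (S' : Set Ω) (hS' : MeasurableSet S')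
    (h : ν.withDensity p S' ≥ ν.withDensity p {x | q x ≤ t * p x}) :
    ν.withDensity q S' ≥ ν.withDensity q {x | q x ≤ t * p x} := by
  set S : Set Ω := {x | q x ≤ t * p x}
  have hS : MeasurableSet S := measurableSet_le hq (hp.const_mul t)
  have hP : ν.withDensity p (S \ S') ≤ ν.withDensity p (S' \ S) :=
    measure_sdiff_le_sdiff_of_le hS hS' h
  refine measure_le_of_sdiff_le_sdiff hS hS' ?_
  calc ν.withDensity q (S \ S')
      ≤ t * ν.withDensity p (S \ S') :=
        withDensity_apply_le_const_mul hp (hS.diff hS') fun _ hx ↦ hx.1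
    _ ≤ t * ν.withDensity p (S' \ S) := by gcongr
    _ ≤ ν.withDensity q (S' \ S) :=
        const_mul_le_withDensity_apply (hS'.diff hS) fun _ hx ↦ (not_le.mp hx.2).le

/-- Neyman–Pearson comparison lemma, sublevel form: among all measurable sets of at least a
given `P`-probability, the likelihood-ratio sublevel set minimizes the `Q`-probability. -/
theorem neymanPearson_sublevel
    {Ω : Type*} [MeasurableSpace Ω] (ν : Measure Ω) [SigmaFinite ν]
    (p q : Ω → ENNReal) (hp : Measurable p) (hq : Measurable q)
    [IsProbabilityMeasure (ν.withDensity p)] [IsProbabilityMeasure (ν.withDensity q)]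
    (t : ENNReal) (S' : Set Ω) (hS' : MeasurableSet S')
    (h : ν.withDensity p S' ≥ ν.withDensity p {x | q x ≤ t * p x}) :
    ν.withDensity q S' ≥ ν.withDensity q {x | q x ≤ t * p x} :=
  neymanPearson_sublevel_general ν p q hp hq t S' hS' h
end
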